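/- arXiv:2205.04531 — 2 statements merged into one kernel-verified Lean document; each statement's English description precedes it below -/
import Mathlib

section
/- Let g > 0 and k₀ be real numbers and define φ : ℝ → ℝ by φ(σ) = g/(1 + exp(k₀ - σ)) - g/(1 + exp(k₀)). Then φ satisfies the sector condition with bounds 0 and g/4: for every σ ∈ ℝ, 0 ≤ σ·φ(σ) and σ·φ(σ) ≤ (g/4)·σ² (equivalently, for every σ ≠ 0, 0 ≤ φ(σ)/σ ≤ g/4). -/
/-!
Up to the affine change of variable `σ ↦ σ - k₀`, `φ / g` is an increment of the logistic
function `Real.sigmoid`, whose derivative `s (1 - s)` is at most `1/4`. Monotonicity gives the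
lower sector bound and the resulting `1/4`-Lipschitz bound gives the upper one.
-/

open Real NNReal

lemma deriv_sigmoid_le (x : ℝ) : deriv sigmoid x ≤ 1 / 4 := by
  rw [deriv_sigmoid]
  nlinarith [sq_nonneg (sigmoid x - 1 / 2)]

lemma lipschitzWith_sigmoid : LipschitzWith (1 / 4) sigmoid := by
  refine lipschitzWith_of_nnnorm_deriv_le differentiable_sigmoid fun x => ?_
  have hnonneg : 0 ≤ deriv sigmoid x := by
    rw [deriv_sigmoid]
    exact mul_nonneg (sigmoid_nonneg x) (sub_nonneg.2 (sigmoid_le_one x))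
  rw [← NNReal.coe_le_coe, coe_nnnorm, norm_of_nonneg hnonneg]
  simpa using deriv_sigmoid_le x

lemma Monotone.sector_of_lipschitzWith {f : ℝ → ℝ} {L : ℝ≥0} (hf : Monotone f)
    (hL : LipschitzWith L f) (x y : ℝ) :
    0 ≤ (x - y) * (f x - f y) ∧ (x - y) * (f x - f y) ≤ L * (x - y) ^ 2 := by
  have hmono : 0 ≤ (x - y) * (f x - f y) := by
    rcases le_total y x with hyx | hxy
    · exact mul_nonneg (sub_nonneg.2 hyx) (sub_nonneg.2 (hf hyx))
    · exact mul_nonneg_of_nonpos_of_nonpos (sub_nonpos.2 hxy) (sub_nonpos.2 (hf hxy))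
  refine ⟨hmono, ?_⟩
  calc (x - y) * (f x - f y) = |x - y| * |f x - f y| := by rw [← abs_mul, abs_of_nonneg hmono]
    _ ≤ |x - y| * (L * |x - y|) := by
        gcongr
        simpa only [Real.dist_eq] using hL.dist_le_mul x y
    _ = L * (x - y) ^ 2 := by rw [← sq_abs (x - y)]; ring

lemma div_mem_Icc_of_mul_mem_Icc {x y c : ℝ} (hx : x ≠ 0) (h₀ : 0 ≤ x * y)
    (h₁ : x * y ≤ c * x ^ 2) : 0 ≤ y / x ∧ y / x ≤ c := by
  have hx2 : 0 < x ^ 2 := by positivity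
  have hdiv : y / x = x * y / x ^ 2 := by field_simp
  rw [hdiv]
  exact ⟨div_nonneg h₀ hx2.le, (div_le_iff₀ hx2).2 h₁⟩

/-- The centered sigmoid `φ(σ) = g/(1 + exp(k₀ - σ)) - g/(1 + exp(k₀))` (with
`g > 0`) lies in the sector `[0, g/4]`: for every `σ`, `0 ≤ σ·φ(σ)` and
`σ·φ(σ) ≤ (g/4)·σ²`; equivalently `0 ≤ φ(σ)/σ ≤ g/4` for `σ ≠ 0`. -/
theorem stmt_13 (g k₀ : ℝ) (hg : 0 < g) (φ : ℝ → ℝ)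
    (hφ : ∀ σ, φ σ = g / (1 + Real.exp (k₀ - σ)) - g / (1 + Real.exp k₀)) :
    (∀ σ : ℝ, 0 ≤ σ * φ σ ∧ σ * φ σ ≤ (g / 4) * σ ^ 2) ∧
    (∀ σ : ℝ, σ ≠ 0 → 0 ≤ φ σ / σ ∧ φ σ / σ ≤ g / 4) := by
  have hφ_sigmoid : ∀ σ, φ σ = g * (sigmoid (σ - k₀) - sigmoid (0 - k₀)) := fun σ => by
    simp only [hφ, sigmoid_def, neg_sub, sub_zero, div_eq_mul_inv, mul_sub]
  have sector : ∀ σ : ℝ, 0 ≤ σ * φ σ ∧ σ * φ σ ≤ (g / 4) * σ ^ 2 := fun σ => by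
    obtain ⟨hlo, hhi⟩ :=
      sigmoid_monotone.sector_of_lipschitzWith lipschitzWith_sigmoid (σ - k₀) (0 - k₀)
    simp only [sub_sub_sub_cancel_right, sub_zero, NNReal.coe_div, NNReal.coe_one,
      NNReal.coe_ofNat] at hlo hhi
    rw [hφ_sigmoid]
    constructor <;> nlinarith
  exact ⟨sector, fun σ hσ => div_mem_Icc_of_mul_mem_Icc hσ (sector σ).1 (sector σ).2⟩
end

section
/- Let α, β, g, λ, T be strictly positive real numbers with T < 4/(g·λ·α·β) and g·β·λ < 2, and set ν₀ = 8/(g²α²β²). Then for every ω ∈ ℝ, (ν₀/2 - T²λ²/4)·ω⁴ + α²·ν₀·(1 - g·β·λ/2)·ω² + α⁴·ν₀/2 > 0. Equivalently, -(T²ω⁴λ²)/4 - (g·α²·β·ν₀·ω²·λ)/2 + (ν₀/2)·(α² + ω²)² > 0 for all ω. -/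
/-! Both expressions are the same polynomial in `ω²`. Its constant term `α⁴ν₀/2` is positive,
its middle coefficient is nonnegative because `gβλ < 2`, and its leading coefficient
`ν₀/2 - T²λ²/4 = (16 - (Tλgαβ)²) / (4(gαβ)²)` is positive because `0 < Tλgαβ < 4`. -/

lemma quartic_pos_of_coeff_nonneg {a b c : ℝ} (ha : 0 ≤ a) (hb : 0 ≤ b) (hc : 0 < c) (ω : ℝ) :
    0 < a * ω ^ 4 + b * ω ^ 2 + c := by
  positivity

lemma leading_coeff_pos_of_mul_lt_four {k T lam : ℝ} (hk : 0 < k) (h0 : 0 ≤ T * lam * k)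
    (h4 : T * lam * k < 4) : 0 < 8 / k ^ 2 / 2 - T ^ 2 * lam ^ 2 / 4 := by
  have hform : 8 / k ^ 2 / 2 - T ^ 2 * lam ^ 2 / 4 = (16 - (T * lam * k) ^ 2) / (4 * k ^ 2) := by
    field_simp
    ring
  rw [hform]
  apply div_pos <;> nlinarith

/-- The frequency-domain condition of the circle criterion for the neural mass
model network: for positive `α, β, g, λ, T` with `T < 4/(gλαβ)` and `gβλ < 2`,
and `ν₀ = 8/(g²α²β²)`, for every `ω`,
`(ν₀/2 - T²λ²/4)ω⁴ + α²ν₀(1 - gβλ/2)ω² + α⁴ν₀/2 > 0`, equivalently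
`-(T²ω⁴λ²)/4 - (gα²βν₀ω²λ)/2 + (ν₀/2)(α² + ω²)² > 0`. -/
theorem stmt_14 (α β g lam T ν₀ : ℝ)
    (hα : 0 < α) (hβ : 0 < β) (hg : 0 < g) (hlam : 0 < lam) (hT : 0 < T)
    (hTb : T < 4 / (g * lam * α * β)) (hgbl : g * β * lam < 2)
    (hν : ν₀ = 8 / (g ^ 2 * α ^ 2 * β ^ 2)) :
    ∀ ω : ℝ,
      0 < (ν₀ / 2 - T ^ 2 * lam ^ 2 / 4) * ω ^ 4
          + α ^ 2 * ν₀ * (1 - g * β * lam / 2) * ω ^ 2 + α ^ 4 * ν₀ / 2 ∧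
      0 < -(T ^ 2 * ω ^ 4 * lam ^ 2) / 4 - g * α ^ 2 * β * ν₀ * ω ^ 2 * lam / 2
          + (ν₀ / 2) * (α ^ 2 + ω ^ 2) ^ 2 := by
  intro ω
  have hk : 0 < g * α * β := by positivity
  have hν₀ : ν₀ = 8 / (g * α * β) ^ 2 := by rw [hν]; ring
  have hν₀pos : 0 < ν₀ := by rw [hν₀]; positivity
  have hTk : T * lam * (g * α * β) < 4 := by
    rw [lt_div_iff₀ (by positivity)] at hTb
    linarith
  have hlead : 0 < ν₀ / 2 - T ^ 2 * lam ^ 2 / 4 := by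
    rw [hν₀]
    exact leading_coeff_pos_of_mul_lt_four hk (by positivity) hTk
  have hmid : 0 ≤ α ^ 2 * ν₀ * (1 - g * β * lam / 2) := mul_nonneg (by positivity) (by linarith)
  have hquartic := quartic_pos_of_coeff_nonneg hlead.le hmid (by positivity : 0 < α ^ 4 * ν₀ / 2) ω
  exact ⟨hquartic, by linear_combination hquartic⟩
end
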